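/- Let V₊, V₋ ∈ ℂ and α ∈ ℂ with |Re(V₊ − V₋)·Re α + Im(V₊ − V₋)·Im α| < −|α|²·Re α (in particular α ≠ 0 and Re α < 0). Set z(α) := (V₊ + V₋)/2 − (V₊ − V₋)²/(4α²) − α²/4 and define u_α : ℝ → ℂ by u_α(x) := exp((α/2 + (V₊ − V₋)/(2α))·x) for x ≥ 0 and u_α(x) := exp(−(α/2 − (V₊ − V₋)/(2α))·x) for x ≤ 0. Then: ∫_ℝ |u_α(x)|² dx < ∞; u_α is continuous with u_α(0) = 1; u_α is differentiable on (−∞,0) and on (0,+∞), its one-sided derivatives at 0 exist and satisfy u_α'(0⁺) − u_α'(0⁻) = α·u_α(0); and −u_α''(x) + V(x)·u_α(x) = z(α)·u_α(x) for every x ≠ 0. (Thus z(α) is an eigenvalue, with eigenfunction u_α, of the complex point interaction operator 𝓛_α = −d²/dx² + V + α·δ₀ whenever α lies in the region Ω.) -/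

import Mathlib

/-!
On each half-line `u_α` is an exponential `exp (β x)` with `β² = V − z(α)`, decaying at `+∞`
(`Re β₊ < 0`) and at `−∞` (`Re β₋ > 0`), and glued continuously at `0` with `β₊ − β₋ = α`.
The two decay conditions are exactly `α ∈ Ω`, because `Re (β₊) = (|α|² Re α + ⟨w, α⟩) / (2|α|²)`
and `Re (β₋) = (−|α|² Re α + ⟨w, α⟩) / (2|α|²)` with `w = V₊ − V₋`.
-/

open MeasureTheory

/-- The eigenfunction `u_α` of the complex point interaction operator `𝓛_α`. -/
noncomputable def ualpha (Vp Vm α : ℂ) (x : ℝ) : ℂ :=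
  if 0 ≤ x then Complex.exp ((α / 2 + (Vp - Vm) / (2 * α)) * (x : ℂ))
  else Complex.exp (-(α / 2 - (Vp - Vm) / (2 * α)) * (x : ℂ))

open Complex Set

section GluedAtZero

variable {E : Type*} [NormedAddCommGroup E] {f g : ℝ → E}

theorem continuous_ite_zero_le (hf : Continuous f) (hg : Continuous g) (hfg : f 0 = g 0) :
    Continuous fun x => if 0 ≤ x then f x else g x :=
  hf.if_le hg continuous_const continuous_id fun _ hx => hx ▸ hfg

theorem integrable_ite_zero_le (hf : IntegrableOn f (Ici 0)) (hg : IntegrableOn g (Iio 0)) :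
    Integrable fun x => if 0 ≤ x then f x else g x := by
  rw [← integrableOn_univ, ← Iio_union_Ici]
  refine (hg.congr_fun (fun x hx => ?_) measurableSet_Iio).union
    (hf.congr_fun (fun x hx => ?_) measurableSet_Ici)
  · exact (if_neg (not_le.2 hx)).symm
  · exact (if_pos hx).symm

variable [NormedSpace ℝ E] {f' g' : E} {x : ℝ}

theorem hasDerivAt_ite_zero_le (hx : x ≠ 0) (hf : HasDerivAt f f' x) (hg : HasDerivAt g g' x) :
    HasDerivAt (fun t => if 0 ≤ t then f t else g t) (if 0 ≤ x then f' else g') x := by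
  rcases hx.lt_or_gt with hneg | hpos
  · rw [if_neg hneg.not_ge]
    refine hg.congr_of_eventuallyEq ?_
    filter_upwards [Iio_mem_nhds hneg] with t ht using if_neg (not_le.2 ht)
  · rw [if_pos hpos.le]
    refine hf.congr_of_eventuallyEq ?_
    filter_upwards [Ioi_mem_nhds hpos] with t ht using if_pos ht.le

theorem hasDerivWithinAt_Ici_ite_zero_le (hf : HasDerivWithinAt f f' (Ici 0) 0) :
    HasDerivWithinAt (fun t => if 0 ≤ t then f t else g t) f' (Ici 0) 0 :=
  hf.congr (fun _ ht => if_pos ht) (if_pos le_rfl)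

theorem hasDerivWithinAt_Iic_ite_zero_le (hfg : f 0 = g 0)
    (hg : HasDerivWithinAt g g' (Iic 0) 0) :
    HasDerivWithinAt (fun t => if 0 ≤ t then f t else g t) g' (Iic 0) 0 := by
  refine hg.congr (fun t ht => ?_) (by simp [hfg])
  rcases (mem_Iic.1 ht).eq_or_lt with rfl | hneg
  · simp [hfg]
  · exact if_neg hneg.not_ge

end GluedAtZero

theorem hasDerivAt_cexp_mul_ofReal (β : ℂ) (x : ℝ) :
    HasDerivAt (fun t : ℝ => cexp (β * t)) (β * cexp (β * x)) x := by
  simpa [mul_comm] using ((hasDerivAt_id x).ofReal_comp.const_mul β).cexp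

theorem integrable_ite_zero_le_cexp {a b : ℂ} (ha : a.re < 0) (hb : 0 < b.re) :
    Integrable fun x : ℝ => if 0 ≤ x then cexp (a * x) else cexp (b * x) :=
  integrable_ite_zero_le (Iff.mpr integrableOn_Ici_iff_integrableOn_Ioi
    (integrableOn_exp_mul_complex_Ioi ha 0))
    ((integrableOn_exp_mul_complex_Iic hb 0).mono_set Iio_subset_Iic_self)

theorem integrable_sq_norm_ite_cexp {a b : ℂ} (ha : a.re < 0) (hb : 0 < b.re) :
    Integrable fun x : ℝ => ‖if 0 ≤ x then cexp (a * x) else cexp (b * x)‖ ^ 2 := by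
  have hsq (x : ℝ) : ‖if 0 ≤ x then cexp (a * x) else cexp (b * x)‖ ^ 2
      = ‖if 0 ≤ x then cexp (2 * a * x) else cexp (2 * b * x)‖ := by
    split_ifs <;> rw [sq, ← norm_mul, ← Complex.exp_add] <;> ring_nf
  simp_rw [hsq]
  refine (integrable_ite_zero_le_cexp ?_ ?_).norm <;>
    simp only [mul_re, re_ofNat, im_ofNat, zero_mul, sub_zero] <;> linarith

section Region

variable {w α : ℂ}

theorem re_neg_of_abs_inner_lt (h : |w.re * α.re + w.im * α.im| < -(‖α‖ ^ 2 * α.re)) :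
    α.re < 0 :=
  neg_of_mul_neg_right (by linarith [abs_nonneg (w.re * α.re + w.im * α.im)]) (sq_nonneg ‖α‖)

theorem re_half_add_div_neg (h : |w.re * α.re + w.im * α.im| < -(‖α‖ ^ 2 * α.re)) :
    (α / 2 + w / (2 * α)).re < 0 := by
  have hα : α ≠ 0 := fun h0 => by simpa [h0] using re_neg_of_abs_inner_lt h
  have hN : 0 < normSq α := normSq_pos.2 hα
  have hre : (α / 2 + w / (2 * α)).re
      = (normSq α * α.re + (w.re * α.re + w.im * α.im)) / (2 * normSq α) := by
    rw [add_re, div_ofNat_re, mul_comm, ← div_div, div_ofNat_re, div_re]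
    field_simp
  rw [Complex.sq_norm] at h
  rw [hre]
  exact div_neg_of_neg_of_pos (by linarith [(abs_lt.1 h).2]) (by positivity)

theorem re_neg_half_sub_div_pos (h : |w.re * α.re + w.im * α.im| < -(‖α‖ ^ 2 * α.re)) :
    0 < (-(α / 2 - w / (2 * α))).re := by
  have h' : |(-w).re * α.re + (-w).im * α.im| < -(‖α‖ ^ 2 * α.re) := by
    have hneg : (-w).re * α.re + (-w).im * α.im = -(w.re * α.re + w.im * α.im) := by
      simp only [neg_re, neg_im]
      ring
    rwa [hneg, abs_neg]
  have := re_half_add_div_neg h'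
  rw [neg_div, ← sub_eq_add_neg] at this
  rw [neg_re]
  linarith

end Region

section Exponents

variable (Vp Vm α : ℂ)

theorem neg_sq_add_Vp (hα : α ≠ 0) :
    -(α / 2 + (Vp - Vm) / (2 * α)) ^ 2 + Vp
      = (Vp + Vm) / 2 - (Vp - Vm) ^ 2 / (4 * α ^ 2) - α ^ 2 / 4 := by
  field_simp
  ring

theorem neg_sq_add_Vm (hα : α ≠ 0) :
    -(-(α / 2 - (Vp - Vm) / (2 * α))) ^ 2 + Vm
      = (Vp + Vm) / 2 - (Vp - Vm) ^ 2 / (4 * α ^ 2) - α ^ 2 / 4 := by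
  field_simp
  ring

end Exponents

/-- If `α ∈ Ω`, i.e. `|⟨V₊ − V₋, α⟩_{ℝ²}| < −|α|²·Re α` (so `α ≠ 0`, `Re α < 0`), then
`u_α` is square-integrable, continuous with `u_α(0) = 1`, differentiable away from `0`
with one-sided derivatives at `0` satisfying the jump condition
`u_α'(0⁺) − u_α'(0⁻) = α·u_α(0)`, and solves `−u_α'' + V·u_α = z(α)·u_α` away from `0`;
hence `z(α)` is an eigenvalue of `𝓛_α` with eigenfunction `u_α`. -/
theorem stmt16 (Vp Vm α : ℂ)
    (hΩ : |(Vp - Vm).re * α.re + (Vp - Vm).im * α.im| < -(‖α‖ ^ 2 * α.re)) :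
    α ≠ 0 ∧ α.re < 0 ∧
    Integrable (fun x : ℝ => ‖ualpha Vp Vm α x‖ ^ 2) ∧
    Continuous (ualpha Vp Vm α) ∧ ualpha Vp Vm α 0 = 1 ∧
    ∃ du ddu : ℝ → ℂ, ∃ dplus dminus : ℂ,
      (∀ x : ℝ, x ≠ 0 → HasDerivAt (ualpha Vp Vm α) (du x) x) ∧
      HasDerivWithinAt (ualpha Vp Vm α) dplus (Set.Ici 0) 0 ∧
      HasDerivWithinAt (ualpha Vp Vm α) dminus (Set.Iic 0) 0 ∧
      dplus - dminus = α * ualpha Vp Vm α 0 ∧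
      (∀ x : ℝ, x ≠ 0 → HasDerivAt du (ddu x) x) ∧
      (∀ x : ℝ, x ≠ 0 →
        -ddu x + (if 0 ≤ x then Vp else Vm) * ualpha Vp Vm α x
          = ((Vp + Vm) / 2 - (Vp - Vm) ^ 2 / (4 * α ^ 2) - α ^ 2 / 4)
              * ualpha Vp Vm α x) := by
  have hre := re_neg_of_abs_inner_lt hΩ
  have hα : α ≠ 0 := fun h0 => by simp [h0] at hre
  set a := α / 2 + (Vp - Vm) / (2 * α)
  set b := -(α / 2 - (Vp - Vm) / (2 * α))
  have hu : ualpha Vp Vm α = fun x : ℝ => if 0 ≤ x then cexp (a * x) else cexp (b * x) := rfl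
  have hu0 : ualpha Vp Vm α 0 = 1 := by simp [hu]
  have hexp := hasDerivAt_cexp_mul_ofReal
  refine ⟨hα, hre,
    hu ▸ integrable_sq_norm_ite_cexp (re_half_add_div_neg hΩ) (re_neg_half_sub_div_pos hΩ),
    hu ▸ continuous_ite_zero_le (by fun_prop) (by fun_prop) (by simp), hu0,
    fun x => if 0 ≤ x then a * cexp (a * x) else b * cexp (b * x),
    fun x => if 0 ≤ x then a * (a * cexp (a * x)) else b * (b * cexp (b * x)), a, b,
    fun x hx => hu ▸ hasDerivAt_ite_zero_le hx (hexp a x) (hexp b x),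
    hu ▸ hasDerivWithinAt_Ici_ite_zero_le (by simpa using (hexp a 0).hasDerivWithinAt),
    hu ▸ hasDerivWithinAt_Iic_ite_zero_le (by simp) (by simpa using (hexp b 0).hasDerivWithinAt),
    by rw [hu0]; ring,
    fun x hx => hasDerivAt_ite_zero_le hx ((hexp a x).const_mul a) ((hexp b x).const_mul b), ?_⟩
  intro x _
  simp only [hu]
  split_ifs
  · linear_combination cexp (a * x) * neg_sq_add_Vp Vp Vm α hα
  · linear_combination cexp (b * x) * neg_sq_add_Vm Vp Vm α hα
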